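/- arXiv:2011.04822 — 5 statements merged into one kernel-verified Lean document; each statement's English description precedes it below -/
import Mathlib

section
/- Let R be a ring, G an additive subgroup of R of finite index with Stab_R(G) of finite index in (R,+). Then G contains a left ideal of R of finite index, namely J(G) = {x ∈ G : r·x ∈ G for all r ∈ R}. -/
/-- The left stabilizer of an additive subgroup `G` of a ring, as an additive subgroup. -/
def leftStab {R : Type*} [Ring R] (G : AddSubgroup R) : AddSubgroup R where
  carrier := {r : R | ∀ x ∈ G, r * x ∈ G}
  zero_mem' := by intro x hx; simpa using G.zero_mem
  add_mem' := by
    intro a b ha hb x hx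
    have := G.add_mem (ha x hx) (hb x hx)
    simpa [add_mul] using this
  neg_mem' := by
    intro a ha x hx
    have := G.neg_mem (ha x hx)
    simpa [neg_mul] using this

/-! The quotient `R ⧸ Stab_R(G)` is finite, and for `x ∈ G` whether `r * x ∈ G` depends only on
the class of `r` modulo `Stab_R(G)`. So `J(G)` is the intersection of `G` with the finitely many
preimages `{x | q * x ∈ G}`, `q` running over representatives of the classes, each of which has
finite index because `G` does. -/

namespace AddSubgroup

theorem index_comap_ne_zero {A B : Type*} [AddGroup A] [AddGroup B] {H : AddSubgroup B}
    (f : A →+ B) (hH : H.index ≠ 0) : (H.comap f).index ≠ 0 := by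
  simpa [relIndex_top_right] using relIndex_comap_ne_zero f (K := ⊤) (by rwa [relIndex_top_right])

variable {R : Type*} [Ring R]

/-- The paper's `J(G)`: the largest left ideal contained in `G`. -/
def leftIdealCore (G : AddSubgroup R) : Ideal R where
  carrier := {x | x ∈ G ∧ ∀ r : R, r * x ∈ G}
  zero_mem' := ⟨G.zero_mem, fun _ => by simp⟩
  add_mem' := fun ha hb => ⟨G.add_mem ha.1 hb.1, fun r => by
    simpa only [mul_add] using G.add_mem (ha.2 r) (hb.2 r)⟩
  smul_mem' := fun c x hx => ⟨hx.2 c, fun r => by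
    simpa only [smul_eq_mul, ← mul_assoc] using hx.2 (r * c)⟩

theorem mul_mem_iff_of_mk_eq {G : AddSubgroup R} {r r' x : R}
    (h : (r : R ⧸ leftStab G) = r') (hx : x ∈ G) : r * x ∈ G ↔ r' * x ∈ G := by
  have hstab : (-r + r') * x ∈ G := QuotientAddGroup.eq.mp h x hx
  rw [show r' * x = r * x + (-r + r') * x by noncomm_ring]
  exact (G.add_mem_cancel_right hstab).symm

theorem leftIdealCore_eq_inf_iInf (G : AddSubgroup R) :
    (leftIdealCore G).toAddSubgroup =
      G ⊓ ⨅ q : R ⧸ leftStab G, G.comap (AddMonoidHom.mulLeft q.out) := by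
  ext x
  simp only [mem_inf, mem_iInf, mem_comap, AddMonoidHom.coe_mulLeft]
  refine ⟨fun hx => ⟨hx.1, fun q => hx.2 _⟩, fun ⟨hx, hreps⟩ => ⟨hx, fun r => ?_⟩⟩
  exact (mul_mem_iff_of_mk_eq (QuotientAddGroup.out_eq' (r : R ⧸ leftStab G)) hx).mp (hreps r)

theorem index_leftIdealCore_ne_zero {G : AddSubgroup R} (hG : G.index ≠ 0)
    (hstab : (leftStab G).index ≠ 0) : (leftIdealCore G).toAddSubgroup.index ≠ 0 := by
  have : Finite (R ⧸ leftStab G) := finiteIndex_iff_finite_quotient.mp ⟨hstab⟩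
  rw [leftIdealCore_eq_inf_iInf]
  exact index_inf_ne_zero hG (index_iInf_ne_zero fun q => index_comap_ne_zero _ hG)

end AddSubgroup

/-- If `G` is an additive subgroup of finite index in `(R,+)` whose stabilizer
`Stab_R(G)` also has finite index, then `G` contains a left ideal of `R` of finite
index, namely `J(G) = {x ∈ G | ∀ r, r·x ∈ G}`. -/
theorem JG_finite_index_left_ideal {R : Type*} [Ring R] (G : AddSubgroup R)
    (hG : G.index ≠ 0) (hstab : (leftStab G).index ≠ 0) :
    ∃ J : Ideal R,
      (J : Set R) = {x : R | x ∈ G ∧ ∀ r : R, r * x ∈ G} ∧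
      (J : Set R) ⊆ (G : Set R) ∧
      J.toAddSubgroup.index ≠ 0 :=
  ⟨G.leftIdealCore, rfl, fun _ hx => hx.1, AddSubgroup.index_leftIdealCore_ne_zero hG hstab⟩
end

section
/- Let R be a ring. The intersection of all left ideals of R of finite additive index equals the intersection of all right ideals of R of finite additive index, and this common intersection is a two-sided ideal of R. -/
/-!
If `I` is a left ideal of finite index, left multiplication makes `R` act additively on the
finite group `R ⧸ I`, so the kernel `K = {x | x * R ⊆ I}` of this action has finite index.
Then `I ⊓ K` is a finite-index two-sided ideal inside `I`; symmetrically every finite-index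
right ideal contains one. Hence both intersections coincide with the
intersection of all finite-index two-sided ideals, which is itself two-sided.
-/

def IsLeftIdeal {R : Type*} [NonUnitalRing R] (I : AddSubgroup R) : Prop :=
  ∀ r : R, ∀ x ∈ I, r * x ∈ I

def IsRightIdeal {R : Type*} [NonUnitalRing R] (I : AddSubgroup R) : Prop :=
  ∀ r : R, ∀ x ∈ I, x * r ∈ I

theorem biInf_eq_biInf_of_forall_exists_le {α : Type*} [CompleteLattice α] {S T : Set α}
    (hTS : T ⊆ S) (h : ∀ a ∈ S, ∃ b ≤ a, b ∈ T) : ⨅ a ∈ S, a = ⨅ b ∈ T, b :=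
  le_antisymm (biInf_mono hTS) <| le_iInf₂ fun a ha ↦
    let ⟨b, hba, hb⟩ := h a ha
    iInf₂_le_of_le b hb hba

namespace AddMonoidHom

variable {A M : Type*} [AddGroup A] [AddCommGroup M] (φ : A →+ M →+ M) {I : AddSubgroup M}
  (hI : ∀ a, I ≤ I.comap (φ a))

def quotientEnd : A →+ M ⧸ I →+ M ⧸ I where
  toFun a := QuotientAddGroup.map I I (φ a) (hI a)
  map_zero' := by ext; simp
  map_add' a b := by ext; simp

theorem mem_ker_quotientEnd {a : A} : a ∈ (φ.quotientEnd hI).ker ↔ ∀ m, φ a m ∈ I := by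
  simp [quotientEnd, AddMonoidHom.ext_iff, QuotientAddGroup.mk_surjective.forall]

theorem index_ker_quotientEnd_ne_zero (hI' : I.index ≠ 0) : (φ.quotientEnd hI).ker.index ≠ 0 :=
  have : I.FiniteIndex := ⟨hI'⟩
  have : Finite (M ⧸ I →+ M ⧸ I) := DFunLike.finite _
  AddSubgroup.FiniteIndex.index_ne_zero

end AddMonoidHom

section Ideals

variable {R : Type*} [NonUnitalRing R] {I : AddSubgroup R}

theorem IsLeftIdeal.biInf {S : Set (AddSubgroup R)} (hS : ∀ I ∈ S, IsLeftIdeal I) :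
    IsLeftIdeal (⨅ I ∈ S, I) := by
  intro r x hx
  simp only [AddSubgroup.mem_iInf] at hx ⊢
  exact fun I hI ↦ hS I hI r x (hx I hI)

theorem IsRightIdeal.biInf {S : Set (AddSubgroup R)} (hS : ∀ I ∈ S, IsRightIdeal I) :
    IsRightIdeal (⨅ I ∈ S, I) := by
  intro r x hx
  simp only [AddSubgroup.mem_iInf] at hx ⊢
  exact fun I hI ↦ hS I hI r x (hx I hI)

theorem IsLeftIdeal.exists_twoSided_le (hI : IsLeftIdeal I) (hI' : I.index ≠ 0) :
    ∃ J ≤ I, IsLeftIdeal J ∧ IsRightIdeal J ∧ J.index ≠ 0 := by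
  let K := (AddMonoidHom.mul.quotientEnd fun x _ ↦ hI x _).ker
  have hK (x : R) : x ∈ K ↔ ∀ r, x * r ∈ I := AddMonoidHom.mem_ker_quotientEnd _ _
  refine ⟨I ⊓ K, inf_le_left, ?_, ?_, AddSubgroup.index_inf_ne_zero hI'
    (AddMonoidHom.index_ker_quotientEnd_ne_zero _ _ hI')⟩
  · rintro s x ⟨hxI, hxK⟩
    exact ⟨hI s x hxI, (hK _).2 fun r ↦ mul_assoc s x r ▸ hI s _ ((hK x).1 hxK r)⟩
  · rintro s x ⟨-, hxK⟩
    exact ⟨(hK x).1 hxK s, (hK _).2 fun r ↦ (mul_assoc x s r).symm ▸ (hK x).1 hxK (s * r)⟩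

theorem IsRightIdeal.exists_twoSided_le (hI : IsRightIdeal I) (hI' : I.index ≠ 0) :
    ∃ J ≤ I, IsLeftIdeal J ∧ IsRightIdeal J ∧ J.index ≠ 0 := by
  let K := (AddMonoidHom.mul.flip.quotientEnd fun x _ ↦ hI x _).ker
  have hK (x : R) : x ∈ K ↔ ∀ r, r * x ∈ I := AddMonoidHom.mem_ker_quotientEnd _ _
  refine ⟨I ⊓ K, inf_le_left, ?_, ?_, AddSubgroup.index_inf_ne_zero hI'
    (AddMonoidHom.index_ker_quotientEnd_ne_zero _ _ hI')⟩
  · rintro s x ⟨-, hxK⟩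
    exact ⟨(hK x).1 hxK s, (hK _).2 fun r ↦ mul_assoc r s x ▸ (hK x).1 hxK (r * s)⟩
  · rintro s x ⟨hxI, hxK⟩
    exact ⟨hI s x hxI, (hK _).2 fun r ↦ (mul_assoc r x s).symm ▸ hI s _ ((hK x).1 hxK r)⟩

end Ideals

/-- In any ring `R`, the intersection of all left ideals of finite additive index
equals the intersection of all right ideals of finite additive index, and this common
intersection is a two-sided ideal of `R`. -/
theorem inf_finite_index_left_ideals_eq_right {R : Type*} [NonUnitalRing R] :
    (⨅ I ∈ {I : AddSubgroup R | IsLeftIdeal I ∧ I.index ≠ 0}, I) =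
      (⨅ I ∈ {I : AddSubgroup R | IsRightIdeal I ∧ I.index ≠ 0}, I) ∧
    (IsLeftIdeal (⨅ I ∈ {I : AddSubgroup R | IsLeftIdeal I ∧ I.index ≠ 0}, I) ∧
     IsRightIdeal (⨅ I ∈ {I : AddSubgroup R | IsLeftIdeal I ∧ I.index ≠ 0}, I)) := by
  let T := {J : AddSubgroup R | IsLeftIdeal J ∧ IsRightIdeal J ∧ J.index ≠ 0}
  have hL : (⨅ I ∈ {I : AddSubgroup R | IsLeftIdeal I ∧ I.index ≠ 0}, I) = ⨅ J ∈ T, J :=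
    biInf_eq_biInf_of_forall_exists_le (fun J hJ ↦ ⟨hJ.1, hJ.2.2⟩)
      fun I hI ↦ hI.1.exists_twoSided_le hI.2
  have hR : (⨅ I ∈ {I : AddSubgroup R | IsRightIdeal I ∧ I.index ≠ 0}, I) = ⨅ J ∈ T, J :=
    biInf_eq_biInf_of_forall_exists_le (fun J hJ ↦ ⟨hJ.2.1, hJ.2.2⟩)
      fun I hI ↦ hI.1.exists_twoSided_le hI.2
  refine ⟨hL.trans hR.symm, IsLeftIdeal.biInf fun I hI ↦ hI.1, ?_⟩
  rw [hL]
  exact IsRightIdeal.biInf fun J hJ ↦ hJ.2.1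
end

section
/- A discrete abelian group G is torsion if and only if its Pontryagin dual Hom(G, ℝ/ℤ) with the compact-open topology is a profinite group. -/
/-!
Characters of a discrete group form a closed subset of a product of circles, so the dual is
always compact and Hausdorff; the content is total disconnectedness.

If `a` has order `n`, evaluation at `a` is a continuous map from the dual into the finite set of
`n`-th roots of unity, hence constant on connected sets; as characters are determined by their
values, the dual is totally disconnected.

Conversely, the dual of a profinite group is torsion: a continuous character `φ` maps some open
subgroup of finite index `k` into the right half of the circle; since `(φ x ^ k) ^ n = φ ((x ^ n) ^ k)`,
all powers of `φ x ^ k` lie there, and the circle has no small subgroups, so `φ x ^ k = 1`. Applied to the profinite group `PontryaginDual A`, this makes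
the image of `A` in its double dual torsion, and that map is injective because characters into
`ℚ/ℤ ⊆ ℝ/ℤ` separate the points of an abelian group.
-/

open Set Real

lemma Circle.finite_setOf_pow_eq_one {n : ℕ} (hn : 0 < n) : {z : Circle | z ^ n = 1}.Finite :=
  ((Polynomial.nthRootsFinset n (1 : ℂ)).finite_toSet.preimage Circle.coe_injective.injOn).subset
    fun z (hz : z ^ n = 1) => by
      simpa [Polynomial.mem_nthRootsFinset hn] using congr_arg ((↑) : Circle → ℂ) hz

noncomputable def AddCircle.ratToReal : AddCircle (1 : ℚ) →+ AddCircle (1 : ℝ) :=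
  QuotientAddGroup.map _ _ (Rat.castHom ℝ).toAddMonoidHom fun q hq => by
    obtain ⟨n, rfl⟩ := AddSubgroup.mem_zmultiples_iff.mp hq
    exact AddSubgroup.mem_zmultiples_iff.mpr ⟨n, by simp⟩

theorem AddCircle.ratToReal_injective : Function.Injective AddCircle.ratToReal := by
  refine (injective_iff_map_eq_zero _).mpr fun x hx => ?_
  induction x using QuotientAddGroup.induction_on with | H q =>
  obtain ⟨n, hn⟩ := (AddCircle.coe_eq_zero_iff _).mp hx
  exact (AddCircle.coe_eq_zero_iff _).mpr ⟨n, Rat.cast_injective (by simpa using hn)⟩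

namespace PontryaginDual

section Monoid

variable {A : Type*} [Monoid A] [TopologicalSpace A]

instance : ContinuousEvalConst (PontryaginDual A) A Circle :=
  inferInstanceAs (ContinuousEvalConst (A →ₜ* Circle) A Circle)

theorem pow_apply (χ : PontryaginDual A) (n : ℕ) (a : A) : (χ ^ n) a = χ a ^ n :=
  ContinuousMonoidHom.pow_apply χ n a

noncomputable def toDoubleDual : A →* PontryaginDual (PontryaginDual A) where
  toFun a :=
    { toFun := fun χ => χ a
      map_one' := rfl
      map_mul' := fun _ _ => rfl
      continuous_toFun := continuous_eval_const a }
  map_one' := ext fun χ => _root_.map_one χ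
  map_mul' a b := ext fun χ => _root_.map_mul χ a b

theorem totallyDisconnectedSpace_of_isMulTorsion (hA : IsMulTorsion A) :
    TotallyDisconnectedSpace (PontryaginDual A) := by
  refine ⟨fun t _ ht χ hχ ψ hψ => ext fun a => ?_⟩
  have hroots : (fun χ : PontryaginDual A => χ a) '' t ⊆ {z | z ^ orderOf a = 1} := by
    rintro _ ⟨χ, -, rfl⟩
    rw [mem_ofPred_eq, ← map_pow, pow_orderOf_eq_one, _root_.map_one]
  exact Set.Countable.isTotallyDisconnected
    ((Circle.finite_setOf_pow_eq_one (hA a).orderOf_pos).subset hroots).countable _ subset_rfl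
    (ht.image _ (continuous_eval_const a).continuousOn) ⟨χ, hχ, rfl⟩ ⟨ψ, hψ, rfl⟩

end Monoid

theorem isMulTorsion_of_totallyDisconnectedSpace {P : Type*} [Group P] [TopologicalSpace P]
    [IsTopologicalGroup P] [CompactSpace P] [TotallyDisconnectedSpace P] :
    IsMulTorsion (PontryaginDual P) := by
  intro φ
  obtain ⟨N, hN⟩ := ProfiniteGrp.exist_openNormalSubgroup_sub_open_nhds_of_one
    ((Circle.isOpen_centeredArc (π / 2)).preimage φ.continuous)
    (by simp [Circle.mem_centeredArc (by linarith [pi_pos] : π / 2 ≤ π), pi_pos])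
  have := N.toOpenSubgroup.finiteIndex_of_finite_quotient
  refine isOfFinOrder_iff_pow_eq_one.mpr
    ⟨N.index, Nat.pos_of_ne_zero Subgroup.FiniteIndex.index_ne_zero, ext fun x => ?_⟩
  refine Circle.eq_one_of_forall_pow_mem_centeredArc_pi_div_two fun n _ => ?_
  have hmem := hN (Subgroup.pow_index_mem N.toSubgroup (x ^ n))
  rw [pow_apply, ← map_pow, ← map_pow, ← pow_mul, mul_comm, pow_mul]
  exact hmem

section DiscreteCommGroup

variable {A : Type*} [CommGroup A] [TopologicalSpace A] [DiscreteTopology A]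

theorem exists_apply_ne_one {a : A} (ha : a ≠ 1) : ∃ χ : PontryaginDual A, χ a ≠ 1 := by
  obtain ⟨c, hc⟩ := CharacterModule.exists_character_apply_ne_zero_of_ne_zero
    (a := Additive.ofMul a) ha
  let χ : A →* Circle :=
    { toFun := fun x => AddCircle.toCircle (AddCircle.ratToReal (c (Additive.ofMul x)))
      map_one' := by simp
      map_mul' := fun x y => by simp [AddCircle.toCircle_add] }
  refine ⟨⟨χ, continuous_of_discreteTopology⟩, fun h => hc (AddCircle.ratToReal_injective
    (AddCircle.injective_toCircle one_ne_zero ?_))⟩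
  rw [map_zero, AddCircle.toCircle_zero]
  exact h

theorem toDoubleDual_injective :
    Function.Injective (toDoubleDual : A → PontryaginDual (PontryaginDual A)) := by
  refine (injective_iff_map_eq_one _).mpr fun a ha => ?_
  by_contra hne
  obtain ⟨χ, hχ⟩ := exists_apply_ne_one hne
  exact hχ (congr_arg (· χ) ha)

theorem isMulTorsion_iff_totallyDisconnectedSpace :
    IsMulTorsion A ↔ TotallyDisconnectedSpace (PontryaginDual A) :=
  ⟨totallyDisconnectedSpace_of_isMulTorsion, fun _ _ =>
    toDoubleDual_injective.isOfFinOrder_iff.mp (isMulTorsion_of_totallyDisconnectedSpace _)⟩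

end DiscreteCommGroup

end PontryaginDual

/-- A discrete abelian group `G` is torsion if and only if its Pontryagin dual
(the group of characters of `G` with the compact-open topology) is profinite,
i.e. compact, Hausdorff and totally disconnected. -/
theorem torsion_iff_pontryaginDual_profinite (G : Type*) [AddCommGroup G]
    [TopologicalSpace G] [DiscreteTopology G] :
    (∀ g : G, ∃ n : ℕ, 0 < n ∧ n • g = 0) ↔
      (CompactSpace (PontryaginDual (Multiplicative G)) ∧
       T2Space (PontryaginDual (Multiplicative G)) ∧
       TotallyDisconnectedSpace (PontryaginDual (Multiplicative G))) := by
  have torsion_iff : (∀ g : G, ∃ n : ℕ, 0 < n ∧ n • g = 0) ↔ IsMulTorsion (Multiplicative G) :=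
    forall_congr' fun _ => isOfFinAddOrder_iff_nsmul_eq_zero.symm
  rw [torsion_iff, PontryaginDual.isMulTorsion_iff_totallyDisconnectedSpace]
  exact ⟨fun h => ⟨inferInstance, inferInstance, h⟩, fun h => h.2.2⟩
end

section
/- The intersection of two thick subsets of a group is thick. -/
/-!
Colour a pair `i < j` of indices of a long sequence `g` by whether `gᵢ⁻¹ gⱼ ∈ D₁`. By Ramsey's
theorem there is either a large set of indices all of whose pairs land in `D₁`, and thickness of
`D₂` finds a pair inside it landing in `D₂` as well, or a large set none of whose pairs land in
`D₁`, which thickness of `D₁` rules out.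
-/

/-- A subset `D` of a group `G` is thick if it is symmetric and there is `n > 0` such
that among any `n` elements `g₀, …, g_{n-1}` of `G` some quotient `gᵢ⁻¹ gⱼ` (`i < j`)
lies in `D`. -/
def IsThick {G : Type*} [Group G] (D : Set G) : Prop :=
  (∀ d ∈ D, d⁻¹ ∈ D) ∧
    ∃ n : ℕ, 0 < n ∧ ∀ g : Fin n → G, ∃ i j : Fin n, i < j ∧ (g i)⁻¹ * g j ∈ D

open Finset

namespace SimpleGraph

universe u

variable {V : Type u} (G : SimpleGraph V) [DecidableEq V] [DecidableRel G.Adj]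

lemma card_filter_adj_add_card_filter_compl_adj {s : Finset V} {v : V} (hv : v ∈ s) :
    #((s.erase v).filter (G.Adj v)) + #((s.erase v).filter (Gᶜ.Adj v)) = #s - 1 := by
  have hcompl : (s.erase v).filter (Gᶜ.Adj v) = (s.erase v).filter (fun w => ¬G.Adj v w) :=
    filter_congr fun w hw => by simp [compl_adj, (ne_of_mem_erase hw).symm]
  rw [hcompl, card_filter_add_card_filter_not, card_erase_of_mem hv]

variable {G}

lemma exists_isNClique_succ_of_neighbors {p q N : ℕ}
    (hN : ∀ s : Finset V, N ≤ #s → ∃ t ⊆ s, G.IsNClique p t ∨ Gᶜ.IsNClique (q + 1) t)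
    {s : Finset V} {v : V} (hv : v ∈ s) (hs : N ≤ #((s.erase v).filter (G.Adj v))) :
    ∃ t ⊆ s, G.IsNClique (p + 1) t ∨ Gᶜ.IsNClique (q + 1) t := by
  obtain ⟨t, hts, ht | ht⟩ := hN _ hs
  · refine ⟨insert v t, ?_, Or.inl (ht.insert fun w hw => (mem_filter.1 (hts hw)).2)⟩
    exact insert_subset hv ((hts.trans (filter_subset _ _)).trans (erase_subset _ _))
  · exact ⟨t, (hts.trans (filter_subset _ _)).trans (erase_subset _ _), Or.inr ht⟩

theorem exists_isNClique_or_isNClique_compl (p q : ℕ) :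
    ∃ N : ℕ, ∀ {V : Type u} (G : SimpleGraph V) (s : Finset V), N ≤ #s →
      ∃ t ⊆ s, G.IsNClique p t ∨ Gᶜ.IsNClique q t := by
  induction p generalizing q with
  | zero => exact ⟨0, fun _ s _ => ⟨∅, empty_subset s, Or.inl (isNClique_empty.2 rfl)⟩⟩
  | succ p ihp =>
    induction q with
    | zero => exact ⟨0, fun _ s _ => ⟨∅, empty_subset s, Or.inr (isNClique_empty.2 rfl)⟩⟩
    | succ q ihq =>
      obtain ⟨N₁, h₁⟩ := ihp (q + 1)
      obtain ⟨N₂, h₂⟩ := ihq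
      refine ⟨N₁ + N₂ + 1, fun G s hs => ?_⟩
      classical
      obtain ⟨v, hv⟩ : s.Nonempty := card_pos.1 (by omega)
      have hcard := card_filter_adj_add_card_filter_compl_adj G hv
      by_cases hA : N₁ ≤ #((s.erase v).filter (G.Adj v))
      · exact exists_isNClique_succ_of_neighbors (h₁ G) hv hA
      -- Otherwise the non-neighbours of `v` are many: run the same step in `Gᶜ`.
      have h₂' : ∀ s : Finset _, N₂ ≤ #s → ∃ t ⊆ s, Gᶜ.IsNClique q t ∨ Gᶜᶜ.IsNClique (p + 1) t :=
        fun s hs => by simpa only [compl_compl, or_comm] using h₂ G s hs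
      simpa only [compl_compl, or_comm] using
        exists_isNClique_succ_of_neighbors h₂' hv (by omega)

end SimpleGraph

section Thick

variable {G : Type*} [Group G]

def IsThickWith (D : Set G) (n : ℕ) : Prop :=
  ∀ g : Fin n → G, ∃ i j : Fin n, i < j ∧ (g i)⁻¹ * g j ∈ D

variable {D D₁ D₂ : Set G} {n n₁ n₂ : ℕ}

lemma IsThickWith.exists_of_card_le {ι : Type*} [LinearOrder ι] (hD : IsThickWith D n)
    (g : ι → G) {s : Finset ι} (hs : n ≤ #s) :
    ∃ i ∈ s, ∃ j ∈ s, i < j ∧ (g i)⁻¹ * g j ∈ D := by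
  obtain ⟨i, j, hij, hmem⟩ := hD (g ∘ s.orderEmbOfCardLe hs)
  exact ⟨_, s.orderEmbOfCardLe_mem hs i, _, s.orderEmbOfCardLe_mem hs j,
    (s.orderEmbOfCardLe hs).strictMono hij, hmem⟩

theorem IsThickWith.inter (h₁ : IsThickWith D₁ n₁) (h₂ : IsThickWith D₂ n₂) :
    ∃ N, 0 < N ∧ IsThickWith (D₁ ∩ D₂) N := by
  obtain ⟨N, hN⟩ := SimpleGraph.exists_isNClique_or_isNClique_compl.{0} n₂ n₁
  refine ⟨N + 1, N.succ_pos, fun g => ?_⟩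
  let H := SimpleGraph.fromRel fun i j : Fin (N + 1) => i < j ∧ (g i)⁻¹ * g j ∈ D₁
  have hadj {i j : Fin (N + 1)} (hij : i < j) : H.Adj i j ↔ (g i)⁻¹ * g j ∈ D₁ := by
    simp [H, SimpleGraph.fromRel_adj, hij, hij.ne, hij.not_gt]
  obtain ⟨t, -, ht | ht⟩ := hN H univ (by simp)
  · obtain ⟨i, hi, j, hj, hij, hD₂⟩ := h₂.exists_of_card_le g ht.card_eq.ge
    exact ⟨i, j, hij, (hadj hij).1 (ht.isClique hi hj hij.ne), hD₂⟩
  · obtain ⟨i, hi, j, hj, hij, hD₁⟩ := h₁.exists_of_card_le g ht.card_eq.ge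
    exact absurd ((hadj hij).2 hD₁) (ht.isClique hi hj hij.ne).2

end Thick

/-- The intersection of two thick subsets of a group is thick. -/
theorem isThick_inter {G : Type*} [Group G] {D₁ D₂ : Set G}
    (h₁ : IsThick D₁) (h₂ : IsThick D₂) : IsThick (D₁ ∩ D₂) := by
  obtain ⟨hsymm₁, n₁, -, hn₁⟩ := h₁
  obtain ⟨hsymm₂, n₂, -, hn₂⟩ := h₂
  exact ⟨fun d hd => ⟨hsymm₁ d hd.1, hsymm₂ d hd.2⟩, IsThickWith.inter hn₁ hn₂⟩
end

section
/- Let K be an infinite field, D a thick subset of (K,+), and n ∈ ℕ. Then K · Dⁿ = Kⁿ, i.e., for all a₀,…,a_{n-1} ∈ K there exists a ∈ K and d₀,…,d_{n-1} ∈ D with aᵢ = a·dᵢ for each i. -/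
/-- A subset `D` of the additive group `(K,+)` is thick if `D = -D` and there is
`m > 0` such that among any `m` elements `a₀, …, a_{m-1}` some difference `aⱼ - aᵢ`
(`i < j`) lies in `D`. -/
def IsAddThick {K : Type*} [AddGroup K] (D : Set K) : Prop :=
  (∀ d ∈ D, -d ∈ D) ∧
    ∃ m : ℕ, 0 < m ∧ ∀ a : Fin m → K, ∃ i j : Fin m, i < j ∧ a j - a i ∈ D

/-- If `K` is an infinite field and `D ⊆ K` is thick in `(K,+)`, then `K · Dⁿ = Kⁿ`:
for all `a₀, …, a_{n-1} ∈ K` there are `a ∈ K` and `d₀, …, d_{n-1} ∈ D` with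
`aᵢ = a·dᵢ` for each `i`. -/
theorem thick_power_diagonal {K : Type*} [Field K] [Infinite K] (D : Set K)
    (hD : IsAddThick D) (n : ℕ) :
    ∀ a : Fin n → K, ∃ c : K, ∃ d : Fin n → K, (∀ i, d i ∈ D) ∧ ∀ i, a i = c * d i := by
  classical
  obtain ⟨-, m, hm, hth⟩ := hD
  intro a
  set S : Fin n → Set K := fun i => {x | a i * x ∈ D} with hSdef
  have hS : ∀ (i : Fin n) (y : Fin m → K), ∃ s t : Fin m, s < t ∧ y t - y s ∈ S i := by
    intro i y
    obtain ⟨s, t, hst, h⟩ := hth fun j => a i * y j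
    exact ⟨s, t, hst, by simpa [S, mul_sub] using h⟩
  have hm2 : 2 ≤ m := by
    obtain ⟨s, t, hst, -⟩ := hth fun _ => (0 : K)
    have h1 := t.isLt
    have h2 : (s : ℕ) < t := hst
    omega
  set U : Ultrafilter K := Filter.hyperfilter K with hU
  set g : K → Finset (Fin n) :=
    fun x => Finset.univ.filter fun i => {y | y - x ∈ S i} ∈ U with hg
  obtain ⟨v, hv⟩ : ∃ v : Finset (Fin n), {x | g x = v} ∈ U := by
    by_contra h
    push_neg at h
    have h2 : ∀ v : Finset (Fin n), {x | g x = v}ᶜ ∈ U := fun v =>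
      (Ultrafilter.compl_mem_iff_notMem).2 (h v)
    have h3 : (⋂ v ∈ (Finset.univ : Finset (Finset (Fin n))), {x | g x = v}ᶜ) ∈ U :=
      (Filter.biInter_finset_mem _).mpr fun v _ => h2 v
    obtain ⟨x, hx⟩ := Ultrafilter.nonempty_of_mem h3
    exact (Set.mem_iInter₂.mp hx (g x) (Finset.mem_univ _)) rfl
  have hvmem : ∀ x, g x = v → ∀ i : Fin n, ({y | y - x ∈ S i} ∈ U ↔ i ∈ v) := by
    intro x hx i
    rw [← hx]
    simp [g]
  have hB : ∀ x, g x = v → (⋂ i, {y | y - x ∈ S i ↔ i ∈ v}) ∈ U := by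
    intro x hx
    refine Filter.iInter_mem.mpr fun i => ?_
    by_cases hi : i ∈ v
    · have h1 := (hvmem x hx i).2 hi
      exact Filter.mem_of_superset h1 fun z hz => iff_of_true hz hi
    · have h1 : {y | y - x ∈ S i} ∉ U := fun hmem => hi ((hvmem x hx i).1 hmem)
      have h2 := (Ultrafilter.compl_mem_iff_notMem).2 h1
      exact Filter.mem_of_superset h2 fun z hz => iff_of_false hz hi
  have key : ∀ t : ℕ, ∃ x : ℕ → K, (∀ s < t, g (x s) = v) ∧
      ∀ s s' : ℕ, s < s' → s' < t →
        x s' ≠ x s ∧ ∀ i, (x s' - x s ∈ S i ↔ i ∈ v) := by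
    intro t
    induction t with
    | zero => exact ⟨fun _ => 0, by omega, by omega⟩
    | succ t ih =>
      obtain ⟨x, hx1, hx2⟩ := ih
      have hT : ({z | g z = v} ∩ ((⋂ s ∈ Finset.range t, ⋂ i, {z | z - x s ∈ S i ↔ i ∈ v}) ∩
          {z | ∀ s < t, z ≠ x s})) ∈ U := by
        refine Filter.inter_mem hv (Filter.inter_mem ?_ ?_)
        · exact (Filter.biInter_finset_mem _).mpr fun s hs =>
            hB (x s) (hx1 s (Finset.mem_range.mp hs))
        · apply Filter.hyperfilter_le_cofinite
          rw [Filter.mem_cofinite]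
          have hsub : {z : K | ∀ s < t, z ≠ x s}ᶜ ⊆ x '' {s | s < t} := by
            intro z hz
            simp only [Set.mem_compl_iff, Set.mem_setOf_eq, not_forall, not_not] at hz
            obtain ⟨s, hs, hzs⟩ := hz
            exact ⟨s, hs, hzs.symm⟩
          exact ((Set.finite_lt_nat t).image x).subset hsub
      obtain ⟨y, hy⟩ := Ultrafilter.nonempty_of_mem hT
      obtain ⟨hy1, hy2, hy3⟩ := hy
      refine ⟨fun s => if s = t then y else x s, ?_, ?_⟩
      · intro s hs
        by_cases hst : s = t
        · simpa [hst] using hy1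
        · have : s < t := by omega
          simpa [hst] using hx1 s this
      · intro s s' hss' hs'
        by_cases hst : s' = t
        · have hst' : s ≠ t := by omega
          have hsT : s < t := by omega
          simp only [hst, if_pos rfl, hst', if_neg hst']
          constructor
          · exact hy3 s hsT
          · intro i
            have := Set.mem_iInter₂.mp hy2 s (Finset.mem_range.mpr hsT)
            exact Set.mem_iInter.mp this i
        · have hs'T : s' < t := by omega
          have hsT : s ≠ t := by omega
          simp only [hst, if_neg hst, hsT, if_neg hsT]
          exact hx2 s s' hss' hs'T
  obtain ⟨x, hx1, hx2⟩ := key m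
  have hvall : ∀ i, i ∈ v := by
    intro i
    obtain ⟨s, t', hst, hmem⟩ := hS i fun j : Fin m => x j
    have hst' : (s : ℕ) < t' := hst
    exact ((hx2 s t' hst' t'.isLt).2 i).1 hmem
  have h01 := hx2 0 1 (by omega) (by omega)
  have hc : x 1 - x 0 ≠ 0 := sub_ne_zero.mpr h01.1
  refine ⟨(x 1 - x 0)⁻¹, fun i => a i * (x 1 - x 0), fun i => (h01.2 i).2 (hvall i), fun i => ?_⟩
  show a i = (x 1 - x 0)⁻¹ * (a i * (x 1 - x 0))
  rw [mul_comm (a i), inv_mul_cancel_left₀ hc]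
end
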